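/- arXiv:2408.00807 — 2 statements merged into one kernel-verified Lean document; each statement's English description precedes it below -/
import Mathlib

section
/- For all positive integers n and m, and q with 0 < q < 1, the sum over i from 1 to n of q^{i(m-1)}/(1 - q^i)^m equals the sum over r from 1 to n of [n choose r]_q · (-1)^{r-1} q^{binom(r,2) - r n} times the multiple sum over chains r = i_1 ≥ i_2 ≥ ... ≥ i_m ≥ 1 of the product over j of q^{i_j}/(1 - q^{i_j}) (Prodinger's identity). -/
/-!
Write `x_k = q^k/(1-q^k)` and `[n,k]` for the Gaussian binomial. The q-binomial theorem
`∑_r [n,r] q^C(r,2) t^r = ∏_{j<n} (1 + t q^j)` at `t = -1`, together with the q-hockey-stick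
identity `∑_{i=k}^n x_i [i,k] = x_k [n,k]`, gives Dilcher's formula
`dSum q m n = ∑_k (-1)^(k-1) q^C(k,2) [n,k] x_k^m` by induction on `m`. Substituting it into the
right-hand side and exchanging the sums, the coefficient of `x_k^(m-1)` is
`∑_r (-1)^(r-1) q^(C(r,2)-rn) [n,r] [r,k] x_r = (-1)^(k-1) q^(-C(k,2)) / (1-q^k)`.
This is proved by induction on `n` through the q-Pascal rule: the new part of the sum is,
up to a factor, the q-binomial theorem at `t = -q^(k-n)`, where one factor of the product
vanishes.
-/

noncomputable def qPoch (q a : ℝ) (n : ℕ) : ℝ := ∏ j ∈ Finset.range n, (1 - a * q ^ j)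

noncomputable def qBinom (q : ℝ) (n r : ℕ) : ℝ :=
  if r ≤ n then qPoch q q n / (qPoch q q r * qPoch q q (n - r)) else 0

/-- Multiple sum over chains `top ≥ i₁ ≥ ⋯ ≥ i_m ≥ 1` of `∏ q^{i_j}/(1-q^{i_j})`. -/
noncomputable def dSum (q : ℝ) : ℕ → ℕ → ℝ
  | 0, _ => 1
  | m + 1, top => ∑ i ∈ Finset.Icc 1 top, q ^ i / (1 - q ^ i) * dSum q m i

open Finset

lemma Nat.choose_two_add (a b : ℕ) : (a + b).choose 2 = a.choose 2 + a * b + b.choose 2 := by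
  induction b with
  | zero => simp
  | succ b ih => rw [← add_assoc, Nat.choose_succ_succ', Nat.choose_one_right, ih,
      Nat.choose_succ_succ', Nat.choose_one_right]; ring

lemma Nat.choose_two_add_add_choose_two (k : ℕ) : k.choose 2 + k + k.choose 2 = k * k := by
  induction k with
  | zero => rfl
  | succ k ih => rw [Nat.choose_succ_succ', Nat.choose_one_right]; nlinarith

section

variable {q : ℝ}

lemma one_sub_pow_ne_zero (hq : |q| ≠ 1) {k : ℕ} (hk : k ≠ 0) : 1 - q ^ k ≠ 0 := by
  refine sub_ne_zero.2 fun h => hq ?_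
  rw [← pow_eq_one_iff_of_nonneg (abs_nonneg q) hk, pow_abs, ← h, abs_one]

@[simp] lemma qPoch_zero : qPoch q q 0 = 1 := prod_range_zero _

lemma qPoch_succ (n : ℕ) : qPoch q q (n + 1) = qPoch q q n * (1 - q ^ (n + 1)) := by
  rw [qPoch, prod_range_succ, pow_succ']
  rfl

lemma qPoch_ne_zero (hq : |q| ≠ 1) (n : ℕ) : qPoch q q n ≠ 0 :=
  prod_ne_zero_iff.2 fun j _ => by rw [← pow_succ']; exact one_sub_pow_ne_zero hq j.succ_ne_zero

lemma qBinom_of_le {n r : ℕ} (h : r ≤ n) :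
    qBinom q n r = qPoch q q n / (qPoch q q r * qPoch q q (n - r)) := if_pos h

lemma qBinom_of_lt {n r : ℕ} (h : n < r) : qBinom q n r = 0 := if_neg h.not_ge

lemma qBinom_zero_right (hq : |q| ≠ 1) (n : ℕ) : qBinom q n 0 = 1 := by
  rw [qBinom_of_le n.zero_le, qPoch_zero, one_mul, Nat.sub_zero, div_self (qPoch_ne_zero hq n)]

lemma qBinom_self (hq : |q| ≠ 1) (n : ℕ) : qBinom q n n = 1 := by
  rw [qBinom_of_le le_rfl, Nat.sub_self, qPoch_zero, mul_one, div_self (qPoch_ne_zero hq n)]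

lemma qBinom_succ_succ (hq : |q| ≠ 1) (n r : ℕ) :
    qBinom q (n + 1) (r + 1) = qBinom q n r + q ^ (r + 1) * qBinom q n (r + 1) := by
  rcases lt_trichotomy r n with h | rfl | h
  · obtain ⟨a, rfl⟩ : ∃ a, n = r + 1 + a := ⟨n - r - 1, by omega⟩
    rw [qBinom_of_le (by omega), qBinom_of_le (by omega), qBinom_of_le (by omega),
      show r + 1 + a + 1 - (r + 1) = a + 1 by omega, show r + 1 + a - r = a + 1 by omega,
      Nat.add_sub_cancel_left, qPoch_succ (r + 1 + a), qPoch_succ r, qPoch_succ a]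
    have := qPoch_ne_zero hq r
    have := qPoch_ne_zero hq a
    have := one_sub_pow_ne_zero hq (r.succ_ne_zero)
    have := one_sub_pow_ne_zero hq (a.succ_ne_zero)
    field_simp
    ring
  · rw [qBinom_self hq, qBinom_self hq, qBinom_of_lt r.lt_succ_self, mul_zero, add_zero]
  · rw [qBinom_of_lt h, qBinom_of_lt (by omega), qBinom_of_lt (by omega), mul_zero, add_zero]

lemma qBinom_succ_succ' (hq : |q| ≠ 1) {n r : ℕ} (h : r ≤ n) :
    qBinom q (n + 1) (r + 1) = q ^ (n - r) * qBinom q n r + qBinom q n (r + 1) := by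
  rcases h.lt_or_eq with h | rfl
  · obtain ⟨a, rfl⟩ : ∃ a, n = r + 1 + a := ⟨n - r - 1, by omega⟩
    rw [qBinom_of_le (by omega), qBinom_of_le (by omega), qBinom_of_le (by omega),
      show r + 1 + a + 1 - (r + 1) = a + 1 by omega, show r + 1 + a - r = a + 1 by omega,
      Nat.add_sub_cancel_left, qPoch_succ (r + 1 + a), qPoch_succ r, qPoch_succ a]
    have := qPoch_ne_zero hq r
    have := qPoch_ne_zero hq a
    have := one_sub_pow_ne_zero hq (r.succ_ne_zero)
    have := one_sub_pow_ne_zero hq (a.succ_ne_zero)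
    field_simp
    ring
  · rw [qBinom_self hq, qBinom_self hq, qBinom_of_lt r.lt_succ_self, Nat.sub_self, pow_zero,
      one_mul, add_zero]

lemma qBinom_succ_succ_eq_div_mul (hq : |q| ≠ 1) (n r : ℕ) :
    qBinom q (n + 1) (r + 1) = (1 - q ^ (n + 1)) / (1 - q ^ (r + 1)) * qBinom q n r := by
  rcases le_or_gt r n with h | h
  · obtain ⟨a, rfl⟩ : ∃ a, n = r + a := ⟨n - r, by omega⟩
    rw [qBinom_of_le (by omega), qBinom_of_le h, show r + a + 1 - (r + 1) = a by omega,
      Nat.add_sub_cancel_left, qPoch_succ (r + a), qPoch_succ r]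
    have := qPoch_ne_zero hq r
    have := qPoch_ne_zero hq a
    have := one_sub_pow_ne_zero hq (r.succ_ne_zero)
    field_simp
  · rw [qBinom_of_lt h, qBinom_of_lt (by omega), mul_zero]

lemma qBinom_mul (hq : |q| ≠ 1) {n s k : ℕ} (hks : k ≤ s) (hsn : s ≤ n) :
    qBinom q n s * qBinom q s k = qBinom q n k * qBinom q (n - k) (s - k) := by
  rw [qBinom_of_le hsn, qBinom_of_le hks, qBinom_of_le (hks.trans hsn), qBinom_of_le (by omega),
    show n - k - (s - k) = n - s by omega]
  have := qPoch_ne_zero hq (n - s)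
  have := qPoch_ne_zero hq (s - k)
  have := qPoch_ne_zero hq k
  have := qPoch_ne_zero hq s
  have := qPoch_ne_zero hq (n - k)
  field_simp

theorem qBinom_theorem (hq : |q| ≠ 1) (n : ℕ) (t : ℝ) :
    ∑ r ∈ range (n + 1), qBinom q n r * q ^ r.choose 2 * t ^ r =
      ∏ j ∈ range n, (1 + t * q ^ j) := by
  induction n generalizing t with
  | zero => simp [qBinom_self hq]
  | succ n ih =>
    have hshift :
        ∑ r ∈ range (n + 1), qBinom q n (r + 1) * q ^ (r + 1).choose 2 * (q * t) ^ (r + 1)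
          = ∑ r ∈ range (n + 1), qBinom q n r * q ^ r.choose 2 * (q * t) ^ r - 1 := by
      rw [sum_range_succ, qBinom_of_lt n.lt_succ_self, sum_range_succ' _ n, qBinom_zero_right hq]
      simp
    calc ∑ r ∈ range (n + 1 + 1), qBinom q (n + 1) r * q ^ r.choose 2 * t ^ r
        = 1 + ∑ r ∈ range (n + 1), (t * (qBinom q n r * q ^ r.choose 2 * (q * t) ^ r)
            + qBinom q n (r + 1) * q ^ (r + 1).choose 2 * (q * t) ^ (r + 1)) := by
          rw [sum_range_succ', qBinom_zero_right hq, add_comm]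
          congr 1
          · simp
          · exact sum_congr rfl fun r _ => by
              rw [qBinom_succ_succ hq, Nat.choose_succ_succ', Nat.choose_one_right]; ring
      _ = (1 + t) * ∏ j ∈ range n, (1 + q * t * q ^ j) := by
          rw [sum_add_distrib, ← mul_sum, hshift, ih]; ring
      _ = ∏ j ∈ range (n + 1), (1 + t * q ^ j) := by
          rw [prod_range_succ', pow_zero, mul_one, mul_comm]
          congr 1
          exact prod_congr rfl fun j _ => by ring

lemma sum_Icc_qBinom_alternating (hq : |q| ≠ 1) {n : ℕ} (hn : n ≠ 0) :
    ∑ k ∈ Icc 1 n, qBinom q n k * (-1) ^ (k - 1) * q ^ k.choose 2 = 1 := by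
  have h := qBinom_theorem hq n (-1)
  rw [prod_eq_zero (mem_range.2 (Nat.pos_of_ne_zero hn)) (by simp),
    sum_range_eq_add_Ico _ (by omega : 0 < n + 1), Ico_add_one_right_eq_Icc,
    qBinom_zero_right hq] at h
  simp only [Nat.choose_zero_succ, pow_zero, mul_one] at h
  have hterm : ∀ k ∈ Icc 1 n, qBinom q n k * (-1) ^ (k - 1) * q ^ k.choose 2
      = -(qBinom q n k * q ^ k.choose 2 * (-1) ^ k) := fun k hk => by
    obtain ⟨j, rfl⟩ : ∃ j, k = j + 1 := ⟨k - 1, by simp at hk; omega⟩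
    rw [Nat.add_sub_cancel, pow_succ]; ring
  rw [sum_congr rfl hterm, sum_neg_distrib]
  linarith

lemma sum_range_qBinom_mul_neg_inv_pow_eq_zero (hq : |q| ≠ 1) (hq0 : q ≠ 0) {N j : ℕ}
    (hj : j < N) :
    ∑ i ∈ range (N + 1), qBinom q N i * q ^ i.choose 2 * (-(q ^ j)⁻¹) ^ i = 0 := by
  rw [qBinom_theorem hq]
  exact prod_eq_zero (mem_range.2 hj) (by field_simp; ring)

lemma sum_Icc_pow_div_mul_qBinom (hq : |q| ≠ 1) (k n : ℕ) :
    ∑ i ∈ Icc (k + 1) n, q ^ i / (1 - q ^ i) * qBinom q i (k + 1)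
      = q ^ (k + 1) / (1 - q ^ (k + 1)) * qBinom q n (k + 1) := by
  induction n with
  | zero => rw [Icc_eq_empty (by omega), sum_empty, qBinom_of_lt (by omega), mul_zero]
  | succ n ih =>
    rcases Nat.lt_or_ge n k with h | h
    · rw [Icc_eq_empty (by omega), sum_empty, qBinom_of_lt (by omega), mul_zero]
    · obtain ⟨a, rfl⟩ : ∃ a, n = k + a := ⟨n - k, by omega⟩
      have hpascal := qBinom_succ_succ' (q := q) hq (Nat.le_add_right k a)
      rw [qBinom_succ_succ_eq_div_mul hq, Nat.add_sub_cancel_left] at hpascal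
      rw [sum_Icc_succ_top (by omega), ih, qBinom_succ_succ_eq_div_mul hq,
        eq_sub_of_add_eq' hpascal.symm]
      have := one_sub_pow_ne_zero hq k.succ_ne_zero
      have := one_sub_pow_ne_zero hq (k + a).succ_ne_zero
      field_simp
      ring

lemma sum_Icc_sum_Icc_comm {M : Type*} [AddCommMonoid M] (f : ℕ → ℕ → M) (n : ℕ) :
    ∑ i ∈ Icc 1 n, ∑ k ∈ Icc 1 i, f i k = ∑ k ∈ Icc 1 n, ∑ i ∈ Icc k n, f i k :=
  sum_comm' fun i k => by simp only [mem_Icc]; omega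

theorem dSum_eq_sum_qBinom (hq : |q| ≠ 1) (m : ℕ) {n : ℕ} (hn : n ≠ 0) :
    dSum q m n
      = ∑ k ∈ Icc 1 n,
          qBinom q n k * (-1) ^ (k - 1) * q ^ k.choose 2 * (q ^ k / (1 - q ^ k)) ^ m := by
  induction m generalizing n with
  | zero => simpa [dSum] using (sum_Icc_qBinom_alternating hq hn).symm
  | succ m ih =>
    calc dSum q (m + 1) n
        = ∑ i ∈ Icc 1 n, ∑ k ∈ Icc 1 i, q ^ i / (1 - q ^ i)
            * (qBinom q i k * (-1) ^ (k - 1) * q ^ k.choose 2 * (q ^ k / (1 - q ^ k)) ^ m) :=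
          sum_congr rfl fun i hi => by
            rw [ih (by simp at hi; omega), mul_sum]
      _ = ∑ k ∈ Icc 1 n, (∑ i ∈ Icc k n, q ^ i / (1 - q ^ i) * qBinom q i k)
            * ((-1) ^ (k - 1) * q ^ k.choose 2 * (q ^ k / (1 - q ^ k)) ^ m) := by
          rw [sum_Icc_sum_Icc_comm]
          exact sum_congr rfl fun k _ => by rw [sum_mul]; exact sum_congr rfl fun i _ => by ring
      _ = _ := sum_congr rfl fun k hk => by
          obtain ⟨j, rfl⟩ : ∃ j, k = j + 1 := ⟨k - 1, by simp at hk; omega⟩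
          rw [sum_Icc_pow_div_mul_qBinom hq, pow_succ _ m]
          ring

lemma sum_Icc_qBinom_pred_mul_qBinom_eq_zero (hq : |q| ≠ 1) (hq0 : q ≠ 0) {k n : ℕ}
    (hk : k ≠ 0) (hkn : k ≤ n) :
    ∑ r ∈ Icc k (n + 1), qBinom q n (r - 1) * (-1) ^ (r - 1) *
      (q ^ r.choose 2 * ((q ^ (n + 1))⁻¹) ^ r) * (q ^ r / (1 - q ^ r) * qBinom q r k) = 0 := by
  obtain ⟨j, rfl⟩ : ∃ j, k = j + 1 := ⟨k - 1, by omega⟩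
  obtain ⟨a, rfl⟩ : ∃ a, n = j + 1 + a := ⟨n - j - 1, by omega⟩
  -- With `r = j + 1 + i`, absorption and `qBinom_mul` turn the summand into a constant times the
  -- `i`-th term of the q-binomial theorem at `t = -q^(-a)`.
  rw [← Ico_add_one_right_eq_Icc, sum_Ico_eq_sum_range,
    show j + 1 + a + 1 + 1 - (j + 1) = a + 1 + 1 by omega,
    ← mul_zero ((-1) ^ j * qBinom q (j + 1 + a) j * q ^ (j + 1).choose 2
      * ((q ^ (j + 1 + a + 1))⁻¹) ^ (j + 1) * (q ^ (j + 1) / (1 - q ^ (j + 1)))),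
    ← sum_range_qBinom_mul_neg_inv_pow_eq_zero hq hq0 (lt_add_one a), mul_sum]
  refine sum_congr rfl fun i hi => ?_
  have hmul := qBinom_mul (q := q) hq (Nat.le_add_right j i)
    (show j + i ≤ j + 1 + a by simp at hi; omega)
  rw [Nat.add_sub_cancel_left, show j + 1 + a - j = a + 1 by omega] at hmul
  rw [Nat.choose_two_add, show j + 1 + i = j + i + 1 by omega, Nat.add_sub_cancel,
    qBinom_succ_succ_eq_div_mul hq, neg_pow ((q ^ a)⁻¹)]
  simp only [inv_pow]
  have := one_sub_pow_ne_zero hq (j.succ_ne_zero)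
  have := one_sub_pow_ne_zero hq (j + i).succ_ne_zero
  field_simp
  linear_combination ((-1) ^ (j + i) * q ^ ((j + 1).choose 2 + (j + 1) * i + i.choose 2) *
    q ^ (j + i + 1) * (q ^ (j + 1 + a + 1)) ^ (j + 1) * (q ^ a) ^ i) * hmul

theorem sum_Icc_qBinom_mul_qBinom (hq : |q| ≠ 1) (hq0 : q ≠ 0) {k n : ℕ} (hk : k ≠ 0)
    (hkn : k ≤ n) :
    ∑ r ∈ Icc k n, qBinom q n r * (-1) ^ (r - 1) * (q ^ r.choose 2 * ((q ^ n)⁻¹) ^ r) *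
      (q ^ r / (1 - q ^ r) * qBinom q r k) = (-1) ^ (k - 1) / (q ^ k.choose 2 * (1 - q ^ k)) := by
  induction n, hkn using Nat.le_induction with
  | base =>
    rw [Icc_self, sum_singleton, qBinom_self hq, inv_pow, ← pow_mul,
      ← Nat.choose_two_add_add_choose_two, pow_add, pow_add]
    have := one_sub_pow_ne_zero hq hk
    field_simp
  | succ n hkn ih =>
    have hpascal : ∀ r ∈ Icc k (n + 1),
        qBinom q (n + 1) r * (-1) ^ (r - 1) * (q ^ r.choose 2 * ((q ^ (n + 1))⁻¹) ^ r) *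
          (q ^ r / (1 - q ^ r) * qBinom q r k)
        = qBinom q n (r - 1) * (-1) ^ (r - 1) * (q ^ r.choose 2 * ((q ^ (n + 1))⁻¹) ^ r) *
            (q ^ r / (1 - q ^ r) * qBinom q r k)
          + qBinom q n r * (-1) ^ (r - 1) * (q ^ r.choose 2 * ((q ^ n)⁻¹) ^ r) *
            (q ^ r / (1 - q ^ r) * qBinom q r k) := fun r hr => by
      obtain ⟨s, rfl⟩ : ∃ s, r = s + 1 := ⟨r - 1, by simp at hr; omega⟩
      have hpow : q ^ (s + 1) * ((q ^ (n + 1))⁻¹) ^ (s + 1) = ((q ^ n)⁻¹) ^ (s + 1) := by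
        rw [← mul_pow, pow_succ' q n, mul_inv, mul_inv_cancel_left₀ hq0]
      rw [qBinom_succ_succ hq, Nat.add_sub_cancel]
      linear_combination (qBinom q n (s + 1) * (-1) ^ s * q ^ (s + 1).choose 2 *
        (q ^ (s + 1) / (1 - q ^ (s + 1)) * qBinom q (s + 1) k)) * hpow
    rw [sum_congr rfl hpascal, sum_add_distrib,
      sum_Icc_qBinom_pred_mul_qBinom_eq_zero hq hq0 hk hkn, zero_add,
      sum_Icc_succ_top (by omega), ih, qBinom_of_lt n.lt_succ_self]
    ring

end

/-- The inner chain sum, with largest index `i₁ = r` fixed, is `q^r/(1-q^r) * dSum q (m-1) r`. -/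
theorem prodinger_general (q : ℝ) (hq0 : 0 < q) (hq1 : q < 1) (n m : ℕ) (hm : 0 < m) :
    ∑ i ∈ Finset.Icc 1 n, q ^ (i * (m - 1)) / (1 - q ^ i) ^ m =
      ∑ r ∈ Finset.Icc 1 n,
        qBinom q n r * (-1) ^ (r - 1) * q ^ (((r * (r - 1) / 2 : ℕ) : ℤ) - (r : ℤ) * n) *
          (q ^ r / (1 - q ^ r) * dSum q (m - 1) r) := by
  have hq : |q| ≠ 1 := by rw [abs_of_pos hq0]; exact hq1.ne
  obtain ⟨m, rfl⟩ : ∃ m', m = m' + 1 := ⟨m - 1, by omega⟩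
  have hzpow (r : ℕ) : q ^ (((r * (r - 1) / 2 : ℕ) : ℤ) - (r : ℤ) * n) =
      q ^ r.choose 2 * ((q ^ n)⁻¹) ^ r := by
    rw [← Nat.choose_two_right, zpow_sub₀ hq0.ne', zpow_natCast, mul_comm, zpow_mul,
      zpow_natCast, zpow_natCast, div_eq_mul_inv, inv_pow]
  symm
  calc _ = ∑ r ∈ Icc 1 n, ∑ k ∈ Icc 1 r, qBinom q n r * (-1) ^ (r - 1) *
          (q ^ r.choose 2 * ((q ^ n)⁻¹) ^ r) * (q ^ r / (1 - q ^ r) *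
            (qBinom q r k * (-1) ^ (k - 1) * q ^ k.choose 2 * (q ^ k / (1 - q ^ k)) ^ m)) :=
        sum_congr rfl fun r hr => by
          rw [hzpow, Nat.add_sub_cancel, dSum_eq_sum_qBinom hq m (by simp at hr; omega), mul_sum,
            mul_sum]
    _ = ∑ k ∈ Icc 1 n, (∑ r ∈ Icc k n, qBinom q n r * (-1) ^ (r - 1) *
          (q ^ r.choose 2 * ((q ^ n)⁻¹) ^ r) * (q ^ r / (1 - q ^ r) * qBinom q r k)) *
            ((-1) ^ (k - 1) * q ^ k.choose 2 * (q ^ k / (1 - q ^ k)) ^ m) := by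
      rw [sum_Icc_sum_Icc_comm]
      exact sum_congr rfl fun k _ => by rw [sum_mul]; exact sum_congr rfl fun r _ => by ring
    _ = _ := sum_congr rfl fun k hk => by
      rw [mem_Icc] at hk
      rw [sum_Icc_qBinom_mul_qBinom hq hq0.ne' (by omega) hk.2, Nat.add_sub_cancel, div_pow,
        ← pow_mul]
      have := one_sub_pow_ne_zero hq (show k ≠ 0 by omega)
      field_simp
      rw [pow_right_comm, neg_one_sq, one_pow, one_mul, pow_succ']

/-- Prodinger's identity.  The inner chain sum, with largest index `i₁ = r` fixed,
is `q^r/(1-q^r) * dSum q (m-1) r`. -/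
theorem prodinger (q : ℝ) (hq0 : 0 < q) (hq1 : q < 1) (n m : ℕ) (hn : 0 < n) (hm : 0 < m) :
    ∑ i ∈ Finset.Icc 1 n, q ^ (i * (m - 1)) / (1 - q ^ i) ^ m =
      ∑ r ∈ Finset.Icc 1 n,
        qBinom q n r * (-1) ^ (r - 1) * q ^ (((r * (r - 1) / 2 : ℕ) : ℤ) - (r : ℤ) * n) *
          (q ^ r / (1 - q ^ r) * dSum q (m - 1) r) :=
  prodinger_general q hq0 hq1 n m hm
end

section
/- For integers 1 ≤ i ≤ n, a nonnegative integer k, and parameters z, q with denominators nonzero: ∑_{r≥0} binom(k+r, k) (1-z)^r h_{k+r}(1/(1-q^i), ..., 1/(1-q^n)) = z^{i-n} [(1-q^i)(q;q)_n (z^{-1}q;q)_i] / [(z-q^i)(z^{-1}q;q)_n (q;q)_i] · h_k(1/(z-q^i), ..., 1/(z-q^n)), whenever the series converges. -/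
/-- Complete homogeneous symmetric polynomial `h_k` of the entries of a list. -/
noncomputable def hPoly : List ℝ → ℕ → ℝ
  | _, 0 => 1
  | [], _ + 1 => 0
  | a :: as, k + 1 => a * hPoly (a :: as) k + hPoly as (k + 1)
termination_by l k => (l.length, k)

/-- The list `[f i, f (i+1), …, f n]`. -/
def varList (f : ℕ → ℝ) (i n : ℕ) : List ℝ := (List.range (n + 1 - i)).map fun j => f (i + j)

/-!
Put `t = 1 - z` and `x_j = 1 / (1 - q^j)`. Then `(1 - x_j t)⁻¹ = (1 - q^j) / (z - q^j)` and
`x_j / (1 - x_j t) = 1 / (z - q^j)`, so the theorem is the list identity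
`∑_r C(k+r, k) t^r h_{k+r}(L) = ∏_{x ∈ L} (1 - x t)⁻¹ · h_k(x / (1 - x t) : x ∈ L)`,
valid when `|x t| < 1` for every `x ∈ L`, followed by telescoping the q-Pochhammer quotient.
Both sides of the identity obey the recursion coming from
`h_{m+1}(a, L) = a h_m(a, L) + h_{m+1}(L)` and Pascal's rule, which gives an induction on `L`
and `k`. Convergence of the series forces `|x t| < 1`, since otherwise `h_m(L) t^m` does not
tend to `0`.
-/

open Finset Filter Topology

@[simp]
lemma hPoly_zero (L : List ℝ) : hPoly L 0 = 1 := by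
  cases L <;> simp [hPoly]

@[simp]
lemma hPoly_nil_succ (m : ℕ) : hPoly [] (m + 1) = 0 := by
  simp [hPoly]

lemma hPoly_cons_succ (a : ℝ) (L : List ℝ) (m : ℕ) :
    hPoly (a :: L) (m + 1) = a * hPoly (a :: L) m + hPoly L (m + 1) := by
  simp [hPoly]

lemma hPoly_cons_eq_sum (a : ℝ) (L : List ℝ) (m : ℕ) :
    hPoly (a :: L) m = ∑ j ∈ range (m + 1), a ^ (m - j) * hPoly L j := by
  induction m with
  | zero => simp
  | succ m ih =>
    rw [hPoly_cons_succ, ih, mul_sum, sum_range_succ _ (m + 1), Nat.sub_self, pow_zero, one_mul]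
    congr 1
    refine sum_congr rfl fun j hj => ?_
    rw [← mul_assoc, ← pow_succ', Nat.sub_add_comm (Nat.lt_succ_iff.1 (mem_range.1 hj))]

lemma abs_hPoly_le {M : ℝ} (hM : 0 ≤ M) {L : List ℝ} (hL : ∀ x ∈ L, |x| ≤ M) (m : ℕ) :
    |hPoly L m| ≤ ((m : ℝ) + 1) ^ L.length * M ^ m := by
  induction L generalizing m with
  | nil => cases m <;> simp [pow_nonneg hM]
  | cons a L ih =>
    have hterm : ∀ j ∈ range (m + 1),
        |a ^ (m - j) * hPoly L j| ≤ ((m : ℝ) + 1) ^ L.length * M ^ m := by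
      intro j hj
      have hjm : j ≤ m := Nat.lt_succ_iff.1 (mem_range.1 hj)
      calc |a ^ (m - j) * hPoly L j|
          ≤ M ^ (m - j) * (((j : ℝ) + 1) ^ L.length * M ^ j) := by
            rw [abs_mul, abs_pow]
            exact mul_le_mul (pow_le_pow_left₀ (abs_nonneg a) (hL a (by simp)) _)
              (ih (fun x hx => hL x (by simp [hx])) j) (abs_nonneg _) (pow_nonneg hM _)
        _ = ((j : ℝ) + 1) ^ L.length * M ^ m := by
            rw [mul_left_comm, ← pow_add, Nat.sub_add_cancel hjm]
        _ ≤ ((m : ℝ) + 1) ^ L.length * M ^ m := by gcongr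
    calc |hPoly (a :: L) m| ≤ ∑ j ∈ range (m + 1), |a ^ (m - j) * hPoly L j| := by
          rw [hPoly_cons_eq_sum]; exact abs_sum_le_sum_abs _ _
      _ ≤ ∑ j ∈ range (m + 1), ((m : ℝ) + 1) ^ L.length * M ^ m := sum_le_sum hterm
      _ = ((m : ℝ) + 1) ^ (a :: L).length * M ^ m := by
          rw [sum_const, card_range, nsmul_eq_mul, List.length_cons, pow_succ]; push_cast; ring

lemma exists_abs_le_of_abs_mul_lt_one {t : ℝ} {L : List ℝ} (hL : ∀ x ∈ L, |x * t| < 1) :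
    ∃ M, 0 ≤ M ∧ M * |t| < 1 ∧ ∀ x ∈ L, |x| ≤ M := by
  induction L with
  | nil => exact ⟨0, le_rfl, by simp, by simp⟩
  | cons a L ih =>
    obtain ⟨M, hM0, hMt, hLM⟩ := ih fun x hx => hL x (by simp [hx])
    refine ⟨max |a| M, le_max_of_le_right hM0, ?_, ?_⟩
    · rw [max_mul_of_nonneg _ _ (abs_nonneg t), ← abs_mul]
      exact max_lt (hL a (by simp)) hMt
    · simp only [List.mem_cons, forall_eq_or_imp]
      exact ⟨le_max_left _ _, fun x hx => (hLM x hx).trans (le_max_right _ _)⟩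

lemma summable_add_pow_mul_geometric_of_norm_lt_one {R : Type*} [NormedCommRing R] [CompleteSpace R]
    (c : R) (E : ℕ) {ρ : R} (hρ : ‖ρ‖ < 1) :
    Summable fun n : ℕ => ((n : R) + c) ^ E * ρ ^ n := by
  simp_rw [add_pow, sum_mul]
  refine summable_sum fun m _ => ?_
  refine ((summable_pow_mul_geometric_of_norm_lt_one m hρ).mul_right
    (c ^ (E - m) * (E.choose m : R))).congr fun n => ?_
  ring

lemma summable_choose_mul_pow_mul_hPoly {t : ℝ} {L : List ℝ} (hL : ∀ x ∈ L, |x * t| < 1)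
    (k : ℕ) :
    Summable fun r : ℕ => ((k + r).choose k : ℝ) * t ^ r * hPoly L (k + r) := by
  obtain ⟨M, hM0, hMt, hLM⟩ := exists_abs_le_of_abs_mul_lt_one hL
  have hρ : ‖M * |t|‖ < 1 := by rwa [Real.norm_of_nonneg (by positivity)]
  refine Summable.of_norm_bounded ((summable_add_pow_mul_geometric_of_norm_lt_one
    ((k : ℝ) + 1) (k + L.length) hρ).mul_left (M ^ k)) fun r => ?_
  have hC : ((k + r).choose k : ℝ) ≤ ((r : ℝ) + (k + 1)) ^ k := by
    calc ((k + r).choose k : ℝ) ≤ ((k + r : ℕ) : ℝ) ^ k := by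
          exact_mod_cast Nat.choose_le_pow _ _
      _ ≤ ((r : ℝ) + (k + 1)) ^ k := by gcongr; push_cast; linarith
  have hh : |hPoly L (k + r)| ≤ ((r : ℝ) + (k + 1)) ^ L.length * M ^ (k + r) := by
    convert abs_hPoly_le hM0 hLM (k + r) using 3; push_cast; ring
  rw [Real.norm_eq_abs, abs_mul, abs_mul, Nat.abs_cast, abs_pow]
  calc ((k + r).choose k : ℝ) * |t| ^ r * |hPoly L (k + r)|
      ≤ ((r : ℝ) + (k + 1)) ^ k * |t| ^ r *
          (((r : ℝ) + (k + 1)) ^ L.length * M ^ (k + r)) := by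
        gcongr
    _ = M ^ k * (((r : ℝ) + (k + 1)) ^ (k + L.length) * (M * |t|) ^ r) := by ring

lemma eq_mul_add_of_hasSum_of_succ {R : Type*} [Ring R] [TopologicalSpace R] [IsTopologicalRing R]
    [T2Space R] {f b : ℕ → R} {S B c : R} (hf : HasSum f S) (hb : HasSum b B) (h0 : f 0 = b 0)
    (hsucc : ∀ r, f (r + 1) = c * f r + b (r + 1)) : S = c * S + B := by
  have hf' : HasSum (fun r => f (r + 1)) (S - f 0) := by
    simpa using (hasSum_nat_add_iff' 1).2 hf
  have hb' : HasSum (fun r => b (r + 1)) (B - b 0) := by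
    simpa using (hasSum_nat_add_iff' 1).2 hb
  have h := hf'.unique (by simpa only [hsucc] using (hf.mul_left c).add hb')
  rwa [h0, ← add_sub_assoc, sub_left_inj] at h

theorem hasSum_choose_mul_pow_mul_hPoly {t : ℝ} {L : List ℝ} (hL : ∀ x ∈ L, |x * t| < 1)
    (k : ℕ) :
    HasSum (fun r : ℕ => ((k + r).choose k : ℝ) * t ^ r * hPoly L (k + r))
      ((L.map fun x => (1 - x * t)⁻¹).prod * hPoly (L.map fun x => x / (1 - x * t)) k) := by
  induction L generalizing k with
  | nil =>
    cases k with
    | zero =>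
      convert hasSum_ite_eq 0 (1 : ℝ) using 1
      · ext r; cases r <;> simp
      · simp
    | succ k =>
      simp [show ∀ r, k + 1 + r = k + r + 1 from fun r => by ring]
  | cons a L ih =>
    have hL' : ∀ x ∈ L, |x * t| < 1 := fun x hx => hL x (by simp [hx])
    have hat : 1 - a * t ≠ 0 := by
      have := (abs_lt.1 (hL a (by simp))).2
      linarith
    induction k with
    | zero =>
      obtain ⟨S, hf⟩ := summable_choose_mul_pow_mul_hPoly hL 0
      have key := eq_mul_add_of_hasSum_of_succ hf (ih hL' 0) (by simp)
        (c := a * t) fun r => by simp [hPoly_cons_succ]; ring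
      convert hf using 1
      simp only [List.map_cons, List.prod_cons, hPoly_zero, mul_one] at key ⊢
      rw [inv_mul_eq_iff_eq_mul₀ hat]
      linear_combination -key
    | succ k ihk =>
      obtain ⟨S, hf⟩ := summable_choose_mul_pow_mul_hPoly hL (k + 1)
      have key := eq_mul_add_of_hasSum_of_succ hf ((ihk.mul_left a).add (ih hL' (k + 1)))
        (c := a * t) (by simp [hPoly_cons_succ]) fun r => by
          rw [show k + 1 + (r + 1) = k + 1 + r + 1 by ring, show k + (r + 1) = k + 1 + r by ring,
            hPoly_cons_succ, Nat.choose_succ_succ' (k + 1 + r) k]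
          push_cast
          ring
      convert hf using 1
      simp only [List.map_cons, List.prod_cons, hPoly_cons_succ] at key ⊢
      generalize (List.map (fun x => (1 - x * t)⁻¹) L).prod = P at key ⊢
      generalize hPoly (a / (1 - a * t) :: List.map (fun x => x / (1 - x * t)) L) k = X at key ⊢
      generalize hPoly (List.map (fun x => x / (1 - x * t)) L) (k + 1) = Y at key ⊢
      have hu : (1 - a * t)⁻¹ * (1 - a * t) = 1 := inv_mul_cancel₀ hat
      rw [div_eq_mul_inv]
      linear_combination (-(1 - a * t)⁻¹) * key + S * hu

theorem hasSum_pow_mul_hPoly {t : ℝ} {L : List ℝ} (hL : ∀ x ∈ L, |x * t| < 1) :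
    HasSum (fun r : ℕ => t ^ r * hPoly L r) (L.map fun x => (1 - x * t)⁻¹).prod := by
  simpa using hasSum_choose_mul_pow_mul_hPoly hL 0

lemma tendsto_hPoly_mul_pow_of_cons {a t : ℝ} {L : List ℝ}
    (h : Tendsto (fun m => hPoly (a :: L) m * t ^ m) atTop (𝓝 0)) :
    Tendsto (fun m => hPoly L m * t ^ m) atTop (𝓝 0) := by
  rw [← tendsto_add_atTop_iff_nat 1]
  have hrec : (fun m => hPoly L (m + 1) * t ^ (m + 1)) =
      fun m => hPoly (a :: L) (m + 1) * t ^ (m + 1) - a * t * (hPoly (a :: L) m * t ^ m) := by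
    ext m; rw [hPoly_cons_succ]; ring
  rw [hrec]
  simpa using ((tendsto_add_atTop_iff_nat 1).2 h).sub (h.const_mul (a * t))

-- If `|a t| ≥ 1`, then `h_m(a, L) t^m = (a t)^m ∑_{j ≤ m} h_j(L) a^{-j}`, and these partial
-- sums converge to `∏_{x ∈ L} (1 - x / a)⁻¹ ≠ 0`.
lemma abs_mul_lt_one_of_tendsto_hPoly_cons {a t : ℝ} {L : List ℝ}
    (hL : ∀ x ∈ L, |x * t| < 1)
    (h : Tendsto (fun m => hPoly (a :: L) m * t ^ m) atTop (𝓝 0)) : |a * t| < 1 := by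
  by_contra! hat
  have ha : a ≠ 0 := by rintro rfl; norm_num at hat
  have ht : t ≠ 0 := by rintro rfl; norm_num at hat
  have hLa : ∀ x ∈ L, |x * a⁻¹| < 1 := fun x hx =>
    calc |x * a⁻¹| = |x * t| / |a * t| := by rw [← abs_div]; field_simp
      _ ≤ |x * t| := div_le_self (abs_nonneg _) hat
      _ < 1 := hL x hx
  have hc : (L.map fun x => (1 - x * a⁻¹)⁻¹).prod ≠ 0 := by
    refine List.prod_ne_zero fun h0 => ?_
    obtain ⟨x, hx, hx0⟩ := List.mem_map.1 h0
    rw [inv_eq_zero, sub_eq_zero] at hx0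
    linarith [(abs_lt.1 (hLa x hx)).2]
  have hpartial : Tendsto (fun m => ∑ j ∈ range (m + 1), a⁻¹ ^ j * hPoly L j) atTop
      (𝓝 (L.map fun x => (1 - x * a⁻¹)⁻¹).prod) :=
    (tendsto_add_atTop_iff_nat 1).2 (hasSum_pow_mul_hPoly hLa).tendsto_sum_nat
  have hfactor : ∀ m, hPoly (a :: L) m * t ^ m =
      (a * t) ^ m * ∑ j ∈ range (m + 1), a⁻¹ ^ j * hPoly L j := by
    intro m
    rw [hPoly_cons_eq_sum, sum_mul, mul_sum]
    refine sum_congr rfl fun j hj => ?_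
    rw [pow_sub₀ _ ha (Nat.lt_succ_iff.1 (mem_range.1 hj)), mul_pow, inv_pow]
    field_simp
  have hle : ∀ m,
      |∑ j ∈ range (m + 1), a⁻¹ ^ j * hPoly L j| ≤ |hPoly (a :: L) m * t ^ m| := by
    intro m
    rw [hfactor, abs_mul, abs_pow]
    exact le_mul_of_one_le_left (abs_nonneg _) (one_le_pow₀ hat)
  have hc0 := le_of_tendsto_of_tendsto' hpartial.abs (by simpa using h.abs) hle
  exact hc (abs_nonpos_iff.1 hc0)

lemma forall_abs_mul_lt_one_of_tendsto {t : ℝ} {L : List ℝ}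
    (h : Tendsto (fun m => hPoly L m * t ^ m) atTop (𝓝 0)) : ∀ x ∈ L, |x * t| < 1 := by
  induction L with
  | nil => simp
  | cons a L ih =>
    have hL := ih (tendsto_hPoly_mul_pow_of_cons h)
    exact List.forall_mem_cons.2 ⟨abs_mul_lt_one_of_tendsto_hPoly_cons hL h, hL⟩

lemma tendsto_hPoly_mul_pow_of_summable {t : ℝ} {L : List ℝ} {k : ℕ}
    (hs : Summable fun r : ℕ => ((k + r).choose k : ℝ) * t ^ r * hPoly L (k + r)) :
    Tendsto (fun m => hPoly L m * t ^ m) atTop (𝓝 0) := by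
  rw [← tendsto_add_atTop_iff_nat k]
  refine squeeze_zero_norm (fun r => ?_)
    (by simpa using hs.tendsto_atTop_zero.norm.const_mul (|t| ^ k))
  have hC : (1 : ℝ) ≤ (k + r).choose k := by
    exact_mod_cast Nat.choose_pos (Nat.le_add_right k r)
  rw [add_comm r k, Real.norm_eq_abs, abs_mul, abs_pow, pow_add]
  calc |hPoly L (k + r)| * (|t| ^ k * |t| ^ r) = 1 * (|t| ^ k * (|t| ^ r * |hPoly L (k + r)|)) := by
        ring
    _ ≤ (k + r).choose k * (|t| ^ k * (|t| ^ r * |hPoly L (k + r)|)) := by gcongr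
    _ = |t| ^ k * ((k + r).choose k * |t| ^ r * |hPoly L (k + r)|) := by ring

lemma map_varList (g : ℝ → ℝ) (f : ℕ → ℝ) (i n : ℕ) :
    (varList f i n).map g = varList (fun j => g (f j)) i n := by
  simp [varList, Function.comp_def]

lemma varList_congr {f g : ℕ → ℝ} {i : ℕ} (h : ∀ j, i ≤ j → f j = g j) (n : ℕ) :
    varList f i n = varList g i n :=
  List.map_congr_left fun _ _ => h _ (Nat.le_add_right _ _)

lemma prod_varList (f : ℕ → ℝ) (i d : ℕ) :
    (varList f i (i + d)).prod = ∏ j ∈ range (d + 1), f (i + j) := by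
  rw [varList, show i + d + 1 - i = d + 1 by omega]
  rfl

lemma qPoch_self (q : ℝ) (m : ℕ) : qPoch q q m = ∏ j ∈ range m, (1 - q ^ (j + 1)) :=
  prod_congr rfl fun j _ => by ring

lemma qPoch_inv_mul {z : ℝ} (hz : z ≠ 0) (q : ℝ) (m : ℕ) :
    qPoch q (z⁻¹ * q) m = (∏ j ∈ range m, (z - q ^ (j + 1))) / z ^ m := by
  rw [qPoch, show z ^ m = ∏ _j ∈ range m, z by simp, ← prod_div_distrib]
  exact prod_congr rfl fun j _ => by field_simp; ring

lemma prod_range_div_eq_qPoch {q z : ℝ} (hz : z ≠ 0) (i d : ℕ) (hi : 1 ≤ i)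
    (h1 : ∀ j, 1 ≤ j → 1 - q ^ j ≠ 0) (h2 : ∀ j, 1 ≤ j → z - q ^ j ≠ 0) :
    ∏ j ∈ range (d + 1), (1 - q ^ (i + j)) / (z - q ^ (i + j)) =
      z ^ ((i : ℤ) - ((i + d : ℕ) : ℤ)) *
        ((1 - q ^ i) * qPoch q q (i + d) * qPoch q (z⁻¹ * q) i /
          ((z - q ^ i) * qPoch q (z⁻¹ * q) (i + d) * qPoch q q i)) := by
  have hA : ∏ j ∈ range i, (1 - q ^ (j + 1)) ≠ 0 :=
    prod_ne_zero_iff.2 fun j _ => h1 _ (by omega)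
  have hB : ∏ j ∈ range i, (z - q ^ (j + 1)) ≠ 0 :=
    prod_ne_zero_iff.2 fun j _ => h2 _ (by omega)
  have hC : ∏ j ∈ range d, (z - q ^ (i + (j + 1))) ≠ 0 :=
    prod_ne_zero_iff.2 fun j _ => h2 _ (by omega)
  have hi' : z - q ^ i ≠ 0 := h2 i hi
  rw [qPoch_self, qPoch_self, qPoch_inv_mul hz, qPoch_inv_mul hz,
    prod_range_add (fun j => 1 - q ^ (j + 1)), prod_range_add (fun j => z - q ^ (j + 1)),
    prod_range_succ', prod_div_distrib, zpow_sub₀ hz, zpow_natCast, zpow_natCast]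
  simp only [add_zero, ← add_assoc] at hC ⊢
  field_simp

theorem lemma31_dual_general (q z : ℝ) (i n k : ℕ) (hi : 1 ≤ i) (hin : i ≤ n) (hz : z ≠ 0)
    (hden1 : ∀ j : ℕ, 1 ≤ j → 1 - q ^ j ≠ 0)
    (hden2 : ∀ j : ℕ, 1 ≤ j → z - q ^ j ≠ 0)
    (hs : Summable fun r : ℕ =>
      ((k + r).choose k : ℝ) * (1 - z) ^ r *
        hPoly (varList (fun j => 1 / (1 - q ^ j)) i n) (k + r)) :
    (∑' r : ℕ, ((k + r).choose k : ℝ) * (1 - z) ^ r *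
        hPoly (varList (fun j => 1 / (1 - q ^ j)) i n) (k + r)) =
      z ^ ((i : ℤ) - (n : ℤ)) *
          ((1 - q ^ i) * qPoch q q n * qPoch q (z⁻¹ * q) i /
            ((z - q ^ i) * qPoch q (z⁻¹ * q) n * qPoch q q i)) *
        hPoly (varList (fun j => 1 / (z - q ^ j)) i n) k := by
  obtain ⟨d, rfl⟩ := Nat.exists_eq_add_of_le hin
  have hL := forall_abs_mul_lt_one_of_tendsto (tendsto_hPoly_mul_pow_of_summable hs)
  have hx : ∀ j, i ≤ j → 1 - 1 / (1 - q ^ j) * (1 - z) = (z - q ^ j) / (1 - q ^ j) := by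
    intro j hj
    have h1j := hden1 j (hi.trans hj)
    field_simp
    ring
  rw [(hasSum_choose_mul_pow_mul_hPoly hL k).tsum_eq, map_varList, map_varList, prod_varList,
    ← prod_range_div_eq_qPoch hz i d hi hden1 hden2]
  congr 1
  · exact prod_congr rfl fun j _ => by rw [hx _ (Nat.le_add_right _ _), inv_div]
  · refine congrArg (hPoly · k) (varList_congr (fun j hj => ?_) _)
    have h1j := hden1 j (hi.trans hj)
    have h2j := hden2 j (hi.trans hj)
    rw [hx j hj]
    field_simp

/-- The dual form (3.2) of Lemma 3.1. -/
theorem lemma31_dual (q z : ℝ) (i n k : ℕ) (hi : 1 ≤ i) (hin : i ≤ n) (hz : z ≠ 0)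
    (hden1 : ∀ j : ℕ, 1 ≤ j → 1 - q ^ j ≠ 0)
    (hden2 : ∀ j : ℕ, 1 ≤ j → z - q ^ j ≠ 0)
    (hden3 : ∀ j : ℕ, 1 ≤ j → 1 - z⁻¹ * q ^ j ≠ 0)
    (hs : Summable fun r : ℕ =>
      ((k + r).choose k : ℝ) * (1 - z) ^ r *
        hPoly (varList (fun j => 1 / (1 - q ^ j)) i n) (k + r)) :
    (∑' r : ℕ, ((k + r).choose k : ℝ) * (1 - z) ^ r *
        hPoly (varList (fun j => 1 / (1 - q ^ j)) i n) (k + r)) =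
      z ^ ((i : ℤ) - (n : ℤ)) *
          ((1 - q ^ i) * qPoch q q n * qPoch q (z⁻¹ * q) i /
            ((z - q ^ i) * qPoch q (z⁻¹ * q) n * qPoch q q i)) *
        hPoly (varList (fun j => 1 / (z - q ^ j)) i n) k :=
  lemma31_dual_general q z i n k hi hin hz hden1 hden2 hs
end
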